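/- There exists a well-rounded full-rank lattice L ⊂ ℝ³ that is not similar to any full-rank cyclic lattice in ℝ³; that is, for every full-rank lattice M ⊂ ℝ³ with ρ(M) = M, L is not similar to M. -/

import Mathlib

noncomputable section

/-- A full-rank lattice in `ℝⁿ`: the `ℤ`-span of an `ℝ`-basis of `ℝⁿ`. -/
def IsFullLattice (n : ℕ) (L : Submodule ℤ (EuclideanSpace ℝ (Fin n))) : Prop :=
  ∃ b : Module.Basis (Fin n) ℝ (EuclideanSpace ℝ (Fin n)), L = Submodule.span ℤ (Set.range b)

/-- The minimum of a lattice: the least norm of a nonzero lattice vector. -/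
def latticeMin (n : ℕ) (L : Submodule ℤ (EuclideanSpace ℝ (Fin n))) : ℝ :=
  sInf {r : ℝ | ∃ x ∈ L, x ≠ 0 ∧ ‖x‖ = r}

/-- The set of minimal vectors of the lattice `L`. -/
def minVecs (n : ℕ) (L : Submodule ℤ (EuclideanSpace ℝ (Fin n))) :
    Set (EuclideanSpace ℝ (Fin n)) :=
  {x | x ∈ L ∧ ‖x‖ = latticeMin n L}

/-- A lattice is well-rounded if its minimal vectors span `ℝⁿ` over `ℝ`. -/
def IsWellRounded (n : ℕ) (L : Submodule ℤ (EuclideanSpace ℝ (Fin n))) : Prop :=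
  Submodule.span ℝ (minVecs n L) = ⊤

/-- Similarity of lattices: `L₂ = α U L₁` for some `α > 0` and orthogonal `U`. -/
def SimilarLat (n : ℕ) (L₁ L₂ : Submodule ℤ (EuclideanSpace ℝ (Fin n))) : Prop :=
  ∃ α : ℝ, 0 < α ∧ ∃ U : EuclideanSpace ℝ (Fin n) ≃ₗᵢ[ℝ] EuclideanSpace ℝ (Fin n),
    (L₂ : Set (EuclideanSpace ℝ (Fin n))) = (fun v => α • U v) '' (L₁ : Set (EuclideanSpace ℝ (Fin n)))


/-- The rotation shift operator `ρ(c₁, …, c_n) = (c_n, c₁, …, c_{n-1})`. -/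
def rotShift (n : ℕ) (c : EuclideanSpace ℝ (Fin n)) : EuclideanSpace ℝ (Fin n) :=
  WithLp.toLp 2 (fun i => c ((finRotate n).symm i))

/- Auxiliary development -/
open scoped RealInnerProductSpace


abbrev E3 := EuclideanSpace ℝ (Fin 3)

def u1 : E3 := (WithLp.equiv 2 (Fin 3 → ℝ)).symm ![4, 1, 0]
def u2 : E3 := (WithLp.equiv 2 (Fin 3 → ℝ)).symm ![1, 0, 4]
def u3 : E3 := (WithLp.equiv 2 (Fin 3 → ℝ)).symm ![1, -4, 0]
def uv : Fin 3 → E3 := ![u1, u2, u3]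

lemma g11 : ⟪u1, u1⟫ = 17 := by
  simp [u1, EuclideanSpace.norm_sq_eq, Fin.sum_univ_three]; try norm_num
lemma g22 : ⟪u2, u2⟫ = 17 := by
  simp [u2, EuclideanSpace.norm_sq_eq, Fin.sum_univ_three]; try norm_num
lemma g33 : ⟪u3, u3⟫ = 17 := by
  simp [u3, EuclideanSpace.norm_sq_eq, Fin.sum_univ_three]; try norm_num
lemma g12 : ⟪u1, u2⟫ = 4 := by
  simp [u1, u2, PiLp.inner_apply, Fin.sum_univ_three]; try norm_num
lemma g13 : ⟪u1, u3⟫ = 0 := by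
  simp [u1, u3, PiLp.inner_apply, Fin.sum_univ_three]; try norm_num
lemma g23 : ⟪u2, u3⟫ = 1 := by
  simp [u2, u3, PiLp.inner_apply, Fin.sum_univ_three]; try norm_num

lemma g21 : ⟪u2, u1⟫ = 4 := by rw [real_inner_comm]; exact g12
lemma g31 : ⟪u3, u1⟫ = 0 := by rw [real_inner_comm]; exact g13
lemma g32 : ⟪u3, u2⟫ = 1 := by rw [real_inner_comm]; exact g23

lemma expand_inner (a b c : ℝ) :
    ⟪a • u1 + b • u2 + c • u3, a • u1 + b • u2 + c • u3⟫ =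
      17 * (a ^ 2 + b ^ 2 + c ^ 2) + 8 * (a * b) + 2 * (b * c) := by
  simp only [inner_add_left, inner_add_right, real_inner_smul_left, real_inner_smul_right,
    g11, g22, g33, g12, g13, g23, g21, g31, g32]
  ring

lemma uv_li : LinearIndependent ℝ uv := by
  rw [Fintype.linearIndependent_iff]
  intro g hg
  have h1 : ⟪∑ i, g i • uv i, u1⟫ = 0 := by rw [hg]; simp
  have h2 : ⟪∑ i, g i • uv i, u2⟫ = 0 := by rw [hg]; simp
  have h3 : ⟪∑ i, g i • uv i, u3⟫ = 0 := by rw [hg]; simp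
  simp only [Fin.sum_univ_three, uv, inner_add_left, real_inner_smul_left,
    Matrix.cons_val_zero, Matrix.cons_val_one, Matrix.head_cons,
    Matrix.cons_val_two, Matrix.tail_cons,
    g11, g22, g33, g12, g13, g23, g21, g31, g32] at h1 h2 h3
  intro i
  fin_cases i <;> simp <;> linarith

def ub : Module.Basis (Fin 3) ℝ E3 :=
  basisOfLinearIndependentOfCardEqFinrank uv_li (by simp [finrank_euclideanSpace_fin])

lemma ub_coe : ⇑ub = uv := coe_basisOfLinearIndependentOfCardEqFinrank _ _

def L0 : Submodule ℤ E3 := Submodule.span ℤ (Set.range uv)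

lemma mem_L0 {x : E3} : x ∈ L0 ↔ ∃ f : Fin 3 → ℤ,
    (f 0 : ℝ) • u1 + (f 1 : ℝ) • u2 + (f 2 : ℝ) • u3 = x := by
  rw [L0, Submodule.mem_span_range_iff_exists_fun]
  constructor
  · rintro ⟨f, hf⟩
    refine ⟨f, ?_⟩
    rw [← hf]
    simp [Fin.sum_univ_three, uv, Int.cast_smul_eq_zsmul]
  · rintro ⟨f, hf⟩
    refine ⟨f, ?_⟩
    rw [← hf]
    simp [Fin.sum_univ_three, uv, Int.cast_smul_eq_zsmul]

lemma int_bound (a b c : ℤ) :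
    12 * (a ^ 2 + b ^ 2 + c ^ 2) ≤ 17 * (a ^ 2 + b ^ 2 + c ^ 2) + 8 * (a * b) + 2 * (b * c) := by
  nlinarith [sq_nonneg (a + b), sq_nonneg (b + c), sq_nonneg a, sq_nonneg c]

lemma sq_one_cases (a b c : ℤ) (h : a ^ 2 + b ^ 2 + c ^ 2 = 1) :
    (a = 1 ∧ b = 0 ∧ c = 0) ∨ (a = -1 ∧ b = 0 ∧ c = 0) ∨
    (b = 1 ∧ a = 0 ∧ c = 0) ∨ (b = -1 ∧ a = 0 ∧ c = 0) ∨
    (c = 1 ∧ a = 0 ∧ b = 0) ∨ (c = -1 ∧ a = 0 ∧ b = 0) := by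
  have ha : a ^ 2 ≤ 1 := by nlinarith [sq_nonneg b, sq_nonneg c]
  have hb : b ^ 2 ≤ 1 := by nlinarith [sq_nonneg a, sq_nonneg c]
  have hc : c ^ 2 ≤ 1 := by nlinarith [sq_nonneg a, sq_nonneg b]
  have ha' : -1 ≤ a ∧ a ≤ 1 := by constructor <;> nlinarith
  have hb' : -1 ≤ b ∧ b ≤ 1 := by constructor <;> nlinarith
  have hc' : -1 ≤ c ∧ c ≤ 1 := by constructor <;> nlinarith
  obtain ⟨ha1, ha2⟩ := ha'; obtain ⟨hb1, hb2⟩ := hb'; obtain ⟨hc1, hc2⟩ := hc'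
  interval_cases a <;> interval_cases b <;> interval_cases c <;> omega

lemma int_s_pos (a b c : ℤ) (h : ¬(a = 0 ∧ b = 0 ∧ c = 0)) : 1 ≤ a ^ 2 + b ^ 2 + c ^ 2 := by
  have h' : a ≠ 0 ∨ b ≠ 0 ∨ c ≠ 0 := by tauto
  rcases h' with h' | h' | h'
  · have : 0 < a ^ 2 := by positivity
    nlinarith [sq_nonneg b, sq_nonneg c]
  · have : 0 < b ^ 2 := by positivity
    nlinarith [sq_nonneg a, sq_nonneg c]
  · have : 0 < c ^ 2 := by positivity
    nlinarith [sq_nonneg a, sq_nonneg b]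

lemma int_lb (a b c : ℤ) (h : ¬(a = 0 ∧ b = 0 ∧ c = 0)) :
    17 ≤ 17 * (a ^ 2 + b ^ 2 + c ^ 2) + 8 * (a * b) + 2 * (b * c) := by
  have hs := int_s_pos a b c h
  rcases eq_or_lt_of_le hs with hs1 | hs2
  · rcases sq_one_cases a b c hs1.symm with ⟨rfl, rfl, rfl⟩ | ⟨rfl, rfl, rfl⟩ | ⟨rfl, rfl, rfl⟩ |
      ⟨rfl, rfl, rfl⟩ | ⟨rfl, rfl, rfl⟩ | ⟨rfl, rfl, rfl⟩ <;> norm_num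
  · have := int_bound a b c
    have h2 : 2 ≤ a ^ 2 + b ^ 2 + c ^ 2 := hs2
    linarith

lemma int_eq (a b c : ℤ) (hQ : 17 * (a ^ 2 + b ^ 2 + c ^ 2) + 8 * (a * b) + 2 * (b * c) = 17) :
    (a = 1 ∧ b = 0 ∧ c = 0) ∨ (a = -1 ∧ b = 0 ∧ c = 0) ∨
    (b = 1 ∧ a = 0 ∧ c = 0) ∨ (b = -1 ∧ a = 0 ∧ c = 0) ∨
    (c = 1 ∧ a = 0 ∧ b = 0) ∨ (c = -1 ∧ a = 0 ∧ b = 0) := by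
  have h0 : ¬(a = 0 ∧ b = 0 ∧ c = 0) := by
    rintro ⟨rfl, rfl, rfl⟩; norm_num at hQ
  have hs := int_s_pos a b c h0
  have hub := int_bound a b c
  have hs1 : a ^ 2 + b ^ 2 + c ^ 2 = 1 := by
    rcases eq_or_lt_of_le hs with h | h
    · omega
    · exfalso; have h2 : 2 ≤ a ^ 2 + b ^ 2 + c ^ 2 := h; linarith
  exact sq_one_cases a b c hs1

lemma inner_self_lb {x : E3} (hx : x ∈ L0) (hx0 : x ≠ 0) : 17 ≤ ⟪x, x⟫ := by
  obtain ⟨f, hf⟩ := mem_L0.mp hx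
  have hQ : ⟪x, x⟫ =
      ((17 * ((f 0) ^ 2 + (f 1) ^ 2 + (f 2) ^ 2) + 8 * (f 0 * f 1) + 2 * (f 1 * f 2) : ℤ) : ℝ) := by
    rw [← hf, expand_inner]; push_cast; ring
  have h0 : ¬(f 0 = 0 ∧ f 1 = 0 ∧ f 2 = 0) := by
    rintro ⟨h1, h2, h3⟩
    exact hx0 (by rw [← hf, h1, h2, h3]; simp)
  have := int_lb (f 0) (f 1) (f 2) h0
  rw [hQ]
  exact_mod_cast this

lemma norm_lb {x : E3} (hx : x ∈ L0) (hx0 : x ≠ 0) : Real.sqrt 17 ≤ ‖x‖ := by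
  have h := inner_self_lb hx hx0
  rw [real_inner_self_eq_norm_sq] at h
  calc Real.sqrt 17 ≤ Real.sqrt (‖x‖ ^ 2) := Real.sqrt_le_sqrt h
    _ = ‖x‖ := Real.sqrt_sq (norm_nonneg x)

lemma eq_cases {x : E3} (hx : x ∈ L0) (hn : ⟪x, x⟫ = 17) :
    x = u1 ∨ x = -u1 ∨ x = u2 ∨ x = -u2 ∨ x = u3 ∨ x = -u3 := by
  obtain ⟨f, hf⟩ := mem_L0.mp hx
  have hQ : ((17 * ((f 0) ^ 2 + (f 1) ^ 2 + (f 2) ^ 2) + 8 * (f 0 * f 1) + 2 * (f 1 * f 2) : ℤ) : ℝ)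
      = 17 := by
    rw [← hn, ← hf, expand_inner]; push_cast; ring
  have hQ' : 17 * ((f 0) ^ 2 + (f 1) ^ 2 + (f 2) ^ 2) + 8 * (f 0 * f 1) + 2 * (f 1 * f 2) = 17 := by
    exact_mod_cast hQ
  rcases int_eq _ _ _ hQ' with ⟨h1, h2, h3⟩ | ⟨h1, h2, h3⟩ | ⟨h1, h2, h3⟩ | ⟨h1, h2, h3⟩ |
    ⟨h1, h2, h3⟩ | ⟨h1, h2, h3⟩ <;> rw [← hf, h1, h2, h3] <;> norm_num <;> tauto

lemma norm_u1 : ‖u1‖ = Real.sqrt 17 := by rw [norm_eq_sqrt_real_inner, g11]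
lemma norm_u2 : ‖u2‖ = Real.sqrt 17 := by rw [norm_eq_sqrt_real_inner, g22]
lemma norm_u3 : ‖u3‖ = Real.sqrt 17 := by rw [norm_eq_sqrt_real_inner, g33]

lemma u1_ne_zero : u1 ≠ 0 := by
  intro h
  have := g11
  rw [h] at this
  simp at this

lemma u1_mem : u1 ∈ L0 := Submodule.subset_span ⟨0, rfl⟩
lemma u2_mem : u2 ∈ L0 := Submodule.subset_span ⟨1, rfl⟩
lemma u3_mem : u3 ∈ L0 := Submodule.subset_span ⟨2, rfl⟩

lemma latticeMin_L0 : latticeMin 3 L0 = Real.sqrt 17 := by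
  have hlb : ∀ r ∈ {r : ℝ | ∃ x ∈ L0, x ≠ 0 ∧ ‖x‖ = r}, Real.sqrt 17 ≤ r := by
    rintro r ⟨x, hx, hx0, rfl⟩
    exact norm_lb hx hx0
  have hmem : Real.sqrt 17 ∈ {r : ℝ | ∃ x ∈ L0, x ≠ 0 ∧ ‖x‖ = r} :=
    ⟨u1, u1_mem, u1_ne_zero, norm_u1⟩
  refine le_antisymm (csInf_le ⟨Real.sqrt 17, hlb⟩ hmem) (le_csInf ⟨_, hmem⟩ hlb)

lemma minVecs_L0 {x : E3} (hx : x ∈ minVecs 3 L0) :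
    x = u1 ∨ x = -u1 ∨ x = u2 ∨ x = -u2 ∨ x = u3 ∨ x = -u3 := by
  obtain ⟨hxL, hxn⟩ := hx
  rw [latticeMin_L0] at hxn
  have hinner : ⟪x, x⟫ = 17 := by
    rw [real_inner_self_eq_norm_sq, hxn, Real.sq_sqrt (by norm_num)]
  exact eq_cases hxL hinner

lemma mem_minVecs (x : E3) (hxL : x ∈ L0) (hxn : ‖x‖ = Real.sqrt 17) : x ∈ minVecs 3 L0 :=
  ⟨hxL, by rw [hxn, latticeMin_L0]⟩

def R3 : E3 ≃ₗᵢ[ℝ] E3 := LinearIsometryEquiv.piLpCongrLeft 2 ℝ ℝ (finRotate 3)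

lemma R3_apply (y : E3) (i : Fin 3) : R3 y i = y ((finRotate 3).symm i) := rfl

lemma R3_eq : ⇑R3 = rotShift 3 := by funext y; ext i; rfl

lemma rot3 (i : Fin 3) :
    (finRotate 3).symm ((finRotate 3).symm ((finRotate 3).symm i)) = i := by
  revert i; decide

lemma R3_cube (y : E3) : R3 (R3 (R3 y)) = y := by
  ext i
  show y ((finRotate 3).symm ((finRotate 3).symm ((finRotate 3).symm i))) = y i
  rw [rot3]

def y0 : E3 := (WithLp.equiv 2 (Fin 3 → ℝ)).symm ![1, 0, 0]

lemma R3_ne : R3 y0 ≠ y0 := by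
  intro h
  have h1 : R3 y0 1 = y0 1 := congrArg (fun z : E3 => z 1) h
  rw [R3_apply] at h1
  have e0 : ((finRotate 3).symm (1 : Fin 3)) = 0 := by decide
  rw [e0] at h1
  simp only [y0, WithLp.equiv_symm_apply, PiLp.toLp_apply, Matrix.cons_val_zero, Matrix.cons_val_one,
    Matrix.head_cons] at h1
  norm_num at h1

lemma u2_ne_zero : u2 ≠ 0 := by
  intro h; have := g22; rw [h] at this; simp at this
lemma u3_ne_zero : u3 ≠ 0 := by
  intro h; have := g33; rw [h] at this; simp at this

lemma neg_ne_self' {w : E3} (hw : w ≠ 0) : -w ≠ w := by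
  intro h
  apply hw
  have h2 : (2 : ℝ) • w = 0 := by
    rw [two_smul]
    nth_rewrite 1 [← h]
    simp
  exact (smul_eq_zero.mp h2).resolve_left (by norm_num)

set_option maxHeartbeats 1000000 in
theorem exists_wellRounded_not_similar_cyclic' :
    ∃ L : Submodule ℤ (EuclideanSpace ℝ (Fin 3)), IsFullLattice 3 L ∧ IsWellRounded 3 L ∧
      ∀ M : Submodule ℤ (EuclideanSpace ℝ (Fin 3)), IsFullLattice 3 M →
        rotShift 3 '' (M : Set (EuclideanSpace ℝ (Fin 3))) = (M : Set (EuclideanSpace ℝ (Fin 3))) →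
        ¬ SimilarLat 3 L M := by
  refine ⟨L0, ⟨ub, by rw [ub_coe]; rfl⟩, ?_, ?_⟩
  · -- well-rounded
    have hsub : Set.range uv ⊆ minVecs 3 L0 := by
      rintro _ ⟨i, rfl⟩
      fin_cases i
      · exact mem_minVecs _ u1_mem norm_u1
      · exact mem_minVecs _ u2_mem norm_u2
      · exact mem_minVecs _ u3_mem norm_u3
    have h1 : Submodule.span ℝ (Set.range uv) = ⊤ := by rw [← ub_coe]; exact ub.span_eq
    rw [IsWellRounded, eq_top_iff, ← h1]
    exact Submodule.span_mono hsub
  · rintro M _ hMrot ⟨α, hα, U, hU⟩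
    set V : E3 ≃ₗᵢ[ℝ] E3 := (U.trans R3).trans U.symm with hVdef
    have hVapp : ∀ x : E3, V x = U.symm (R3 (U x)) := fun x => rfl
    -- V preserves L0
    have hVL : ∀ x ∈ L0, V x ∈ L0 := by
      intro x hx
      have hMx : α • U x ∈ (M : Set E3) := by
        rw [hU]; exact ⟨x, hx, rfl⟩
      have hrot : rotShift 3 (α • U x) ∈ (M : Set E3) := by
        rw [← hMrot]; exact ⟨_, hMx, rfl⟩
      have heq : rotShift 3 (α • U x) = α • R3 (U x) := by
        rw [← R3_eq, map_smul]
      rw [heq, hU] at hrot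
      obtain ⟨y, hyL, hy⟩ := hrot
      have hUy : U y = R3 (U x) := smul_right_injective E3 (ne_of_gt hα) hy
      have hyV : y = V x := by
        rw [hVapp, ← hUy, U.symm_apply_apply]
      rwa [hyV] at hyL
    have hVmin : ∀ x ∈ minVecs 3 L0, V x ∈ minVecs 3 L0 := by
      rintro x ⟨hxL, hxn⟩
      exact ⟨hVL x hxL, by rw [V.norm_map]; exact hxn⟩
    have h1 := minVecs_L0 (hVmin u1 (mem_minVecs _ u1_mem norm_u1))
    have h2 := minVecs_L0 (hVmin u2 (mem_minVecs _ u2_mem norm_u2))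
    have h3 := minVecs_L0 (hVmin u3 (mem_minVecs _ u3_mem norm_u3))
    have e12 : ⟪V u1, V u2⟫ = 4 := by rw [LinearIsometryEquiv.inner_map_map, g12]
    have e13 : ⟪V u1, V u3⟫ = 0 := by rw [LinearIsometryEquiv.inner_map_map, g13]
    have e23 : ⟪V u2, V u3⟫ = 1 := by rw [LinearIsometryEquiv.inner_map_map, g23]
    have cube1 : V (V (V u1)) = u1 := by
      simp only [hVapp, LinearIsometryEquiv.apply_symm_apply]
      rw [R3_cube, U.symm_apply_apply]
    have hne1 : -u1 ≠ u1 := neg_ne_self' u1_ne_zero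
    have key : V u1 = u1 ∧ V u2 = u2 ∧ V u3 = u3 := by
      rcases h1 with h1 | h1 | h1 | h1 | h1 | h1 <;>
      rcases h2 with h2 | h2 | h2 | h2 | h2 | h2 <;>
      rcases h3 with h3 | h3 | h3 | h3 | h3 | h3 <;>
      first
        | exact ⟨h1, h2, h3⟩
        | (exfalso; rw [h1, h2] at e12; rw [h1, h3] at e13; rw [h2, h3] at e23;
           revert e12 e13 e23;
           simp only [inner_neg_left, inner_neg_right, g11, g22, g33, g12, g13, g23,
             g21, g31, g32];
           norm_num; done)
        | (simp only [h1, h2, h3, map_neg, neg_neg] at cube1; exact absurd cube1 hne1)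
    -- V is the identity
    have hVid : ∀ x : E3, V x = x := by
      intro x
      conv_rhs => rw [← Module.Basis.sum_repr ub x]
      conv_lhs => rw [← Module.Basis.sum_repr ub x]
      rw [map_sum]
      refine Finset.sum_congr rfl fun i _ => ?_
      rw [map_smul]
      congr 1
      have hcoe : ub i = uv i := by rw [ub_coe]
      fin_cases i <;> rw [hcoe] <;>
        simp only [uv, Matrix.cons_val_zero, Matrix.cons_val_one, Matrix.head_cons,
          Matrix.cons_val_two, Matrix.tail_cons]
      · exact key.1
      · exact key.2.1
      · exact key.2.2
    have hfin := hVid (U.symm y0)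
    rw [hVapp, U.apply_symm_apply] at hfin
    exact R3_ne (U.symm.injective hfin)

/-- There is a well-rounded full-rank lattice in `ℝ³` that is not similar to any
full-rank cyclic lattice in `ℝ³`. -/
theorem exists_wellRounded_not_similar_cyclic :
    ∃ L : Submodule ℤ (EuclideanSpace ℝ (Fin 3)), IsFullLattice 3 L ∧ IsWellRounded 3 L ∧
      ∀ M : Submodule ℤ (EuclideanSpace ℝ (Fin 3)), IsFullLattice 3 M →
        rotShift 3 '' (M : Set (EuclideanSpace ℝ (Fin 3))) = (M : Set (EuclideanSpace ℝ (Fin 3))) →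
        ¬ SimilarLat 3 L M :=
  exists_wellRounded_not_similar_cyclic'

end
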